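/- Let G be a Garside group, r a natural number, p, q ∈ ℤ^r, and v ∈ [p,q] ⊆ G^r. For each i = 1, …, r, write v_i = Δ^{p_i} w_i = z_i Δ^{p_i} with w_i, z_i ∈ G⁺, and assume w_i⁻¹ Δ^{q_i − p_i} ∈ G⁺ and Δ^{q_i − p_i} z_i⁻¹ ∈ G⁺. Let s ∈ S. Then v^{s⁻¹} ∈ [p,q] if and only if for all i = 1, …, r: s z_i ≽ τ^{−p_i}(s) and s (w_i⁻¹ Δ^{q_i − p_i}) ≽ τ^{q_i}(s). -/

import Mathlib

/-! Because `Δ` is balanced, conjugation by `Δ^{±1}` maps simple elements into `G⁺`; as the simple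
elements generate `G⁺`, every `τ^k` preserves `G⁺`. With `vᵢ = zᵢ Δ^{pᵢ}` the lower bound
`Δ^{pᵢ} ≼ s vᵢ s⁻¹` is then the image under `τ^{pᵢ}` of `s zᵢ ≽ τ^{-pᵢ}(s)`, and with
`vᵢ = Δ^{pᵢ} wᵢ` the upper bound `s vᵢ s⁻¹ ≼ Δ^{qᵢ}` is literally `s wᵢ⁻¹ Δ^{qᵢ-pᵢ} ≽ τ^{qᵢ}(s)`. -/

/-- A Garside structure on a group `G`: a submonoid `G⁺` of positive elements
together with a Garside element `Δ`, satisfying the Garside axioms. -/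
structure GarsideStructure (G : Type*) [Group G] where
  /-- the monoid `G⁺` of positive elements -/
  pos : Submonoid G
  /-- the Garside element `Δ` -/
  Δ : G
  delta_mem : Δ ∈ pos
  /-- `G⁺` is Noetherian -/
  noetherian : ∀ a ∈ pos, ∃ n : ℕ, ∀ l : List G,
    (∀ x ∈ l, x ∈ pos ∧ x ≠ 1) → l.prod = a → l.length ≤ n
  /-- any two elements of `G⁺` admit a least common right multiple (w.r.t. `≼`) -/
  lcm_right : ∀ a ∈ pos, ∀ b ∈ pos, ∃ m ∈ pos,
    a⁻¹ * m ∈ pos ∧ b⁻¹ * m ∈ pos ∧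
      ∀ c ∈ pos, a⁻¹ * c ∈ pos → b⁻¹ * c ∈ pos → m⁻¹ * c ∈ pos
  /-- any two elements of `G⁺` admit a least common left multiple (w.r.t. `≽`) -/
  lcm_left : ∀ a ∈ pos, ∀ b ∈ pos, ∃ m ∈ pos,
    m * a⁻¹ ∈ pos ∧ m * b⁻¹ ∈ pos ∧
      ∀ c ∈ pos, c * a⁻¹ ∈ pos → c * b⁻¹ ∈ pos → c * m⁻¹ ∈ pos
  /-- `G` is the group of fractions of `G⁺` -/
  fractions : ∀ g : G, ∃ a ∈ pos, ∃ b ∈ pos, g = a⁻¹ * b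
  /-- `Δ` is balanced: its left divisors in `G⁺` coincide with its right divisors -/
  balanced : ∀ s ∈ pos, (s⁻¹ * Δ ∈ pos ↔ Δ * s⁻¹ ∈ pos)
  /-- the set of simple elements (divisors of `Δ`) is finite -/
  simples_finite : {s : G | s ∈ pos ∧ s⁻¹ * Δ ∈ pos}.Finite
  /-- the simple elements generate `G⁺` -/
  simples_generate : Submonoid.closure {s : G | s ∈ pos ∧ s⁻¹ * Δ ∈ pos} = pos

namespace GarsideStructure

variable {G : Type*} [Group G]

/-- `a ≼ b` : left divisibility. -/
def LeftDvd (Γ : GarsideStructure G) (a b : G) : Prop := a⁻¹ * b ∈ Γ.pos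

/-- `b ≽ a` : right divisibility. -/
def RightDvd (Γ : GarsideStructure G) (b a : G) : Prop := b * a⁻¹ ∈ Γ.pos

/-- a simple element: a divisor of `Δ`. -/
def Simple (Γ : GarsideStructure G) (s : G) : Prop := s ∈ Γ.pos ∧ Γ.LeftDvd s Γ.Δ

/-- an atom of `G⁺`. -/
def Atom (Γ : GarsideStructure G) (a : G) : Prop :=
  a ∈ Γ.pos ∧ a ≠ 1 ∧ ∀ b ∈ Γ.pos, ∀ c ∈ Γ.pos, a = b * c → b = 1 ∨ c = 1

/-- the iterated automorphism `τ^k`, where `τ(x) = Δ⁻¹xΔ`; so `τ^k(x) = Δ^(-k) x Δ^k`. -/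
def tau (Γ : GarsideStructure G) (k : ℤ) (x : G) : G := Γ.Δ ^ (-k) * x * Γ.Δ ^ k

/-- `d` is the greatest common left divisor (`∧`) of `a` and `b`. -/
def IsLeftGcd (Γ : GarsideStructure G) (d a b : G) : Prop :=
  d ∈ Γ.pos ∧ Γ.LeftDvd d a ∧ Γ.LeftDvd d b ∧
    ∀ c ∈ Γ.pos, Γ.LeftDvd c a → Γ.LeftDvd c b → Γ.LeftDvd c d

/-- `d` is the greatest common right divisor (`⋀̃`) of `a` and `b`. -/
def IsRightGcd (Γ : GarsideStructure G) (d a b : G) : Prop :=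
  d ∈ Γ.pos ∧ Γ.RightDvd a d ∧ Γ.RightDvd b d ∧
    ∀ c ∈ Γ.pos, Γ.RightDvd a c → Γ.RightDvd b c → Γ.RightDvd d c

/-- membership of a tuple `a ∈ Gʳ` in the interval `[p,q]`:
`pᵢ ≤ inf aᵢ` (i.e. `Δ^pᵢ ≼ aᵢ`) and `sup aᵢ ≤ qᵢ` (i.e. `aᵢ ≼ Δ^qᵢ`) for all `i`. -/
def InInterval (Γ : GarsideStructure G) {r : ℕ} (p q : Fin r → ℤ) (a : Fin r → G) : Prop :=
  ∀ i, Γ.LeftDvd (Γ.Δ ^ (p i)) (a i) ∧ Γ.LeftDvd (a i) (Γ.Δ ^ (q i))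

/-- `‖a‖`: the maximal number of atoms in an expression of `a` as a product of atoms. -/
noncomputable def anorm (Γ : GarsideStructure G) (a : G) : ℕ :=
  sSup {n | ∃ l : List G, (∀ x ∈ l, Γ.Atom x) ∧ l.prod = a ∧ l.length = n}

end GarsideStructure

namespace GarsideStructure

variable {G : Type*} [Group G] (Γ : GarsideStructure G)

theorem delta_inv_mul_mul_delta_mem {x : G} (hx : x ∈ Γ.pos) : Γ.Δ⁻¹ * x * Γ.Δ ∈ Γ.pos := by
  rw [← Γ.simples_generate] at hx
  induction hx using Submonoid.closure_induction with
  | mem s hs =>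
    -- `s⁻¹ Δ` is a right divisor of `Δ`, hence by balancedness also a left divisor
    simpa [mul_assoc] using (Γ.balanced _ hs.2).mpr (by simpa using hs.1)
  | one => simp [Γ.pos.one_mem]
  | mul a b _ _ ha hb => simpa [mul_assoc] using Γ.pos.mul_mem ha hb

theorem delta_mul_mul_delta_inv_mem {x : G} (hx : x ∈ Γ.pos) : Γ.Δ * x * Γ.Δ⁻¹ ∈ Γ.pos := by
  rw [← Γ.simples_generate] at hx
  induction hx using Submonoid.closure_induction with
  | mem s hs =>
    -- `Δ s⁻¹` is a left divisor of `Δ`, hence by balancedness also a right divisor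
    have hu : Γ.Δ * s⁻¹ ∈ Γ.pos := (Γ.balanced _ hs.1).mp hs.2
    simpa [mul_assoc] using (Γ.balanced _ hu).mp (by simpa using hs.1)
  | one => simp [Γ.pos.one_mem]
  | mul a b _ _ ha hb => simpa [mul_assoc] using Γ.pos.mul_mem ha hb

theorem tau_mem {x : G} (hx : x ∈ Γ.pos) (k : ℤ) : Γ.tau k x ∈ Γ.pos := by
  induction k using Int.induction_on with
  | zero => simpa [tau] using hx
  | succ n ih =>
    rw [show Γ.tau (n + 1) x = Γ.Δ⁻¹ * Γ.tau n x * Γ.Δ by simp only [tau]; group]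
    exact Γ.delta_inv_mul_mul_delta_mem ih
  | pred n ih =>
    rw [show Γ.tau (-n - 1) x = Γ.Δ * Γ.tau (-n) x * Γ.Δ⁻¹ by simp only [tau]; group]
    exact Γ.delta_mul_mul_delta_inv_mem ih

theorem tau_mem_iff (k : ℤ) {x : G} : Γ.tau k x ∈ Γ.pos ↔ x ∈ Γ.pos := by
  refine ⟨fun h => ?_, fun h => Γ.tau_mem h k⟩
  have h' := Γ.tau_mem h (-k)
  rwa [show Γ.tau (-k) (Γ.tau k x) = x by simp only [tau]; group] at h'

theorem zpow_leftDvd_conj_iff (s z : G) (k : ℤ) :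
    Γ.LeftDvd (Γ.Δ ^ k) (s * (z * Γ.Δ ^ k) * s⁻¹) ↔ Γ.RightDvd (s * z) (Γ.tau (-k) s) := by
  rw [RightDvd, ← Γ.tau_mem_iff k, LeftDvd]
  simp only [tau]
  group

theorem conj_leftDvd_zpow_iff (s w : G) (p q : ℤ) :
    Γ.LeftDvd (s * (Γ.Δ ^ p * w) * s⁻¹) (Γ.Δ ^ q) ↔
      Γ.RightDvd (s * (w⁻¹ * Γ.Δ ^ (q - p))) (Γ.tau q s) := by
  simp only [LeftDvd, RightDvd, tau]
  group

end GarsideStructure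

theorem conj_inv_simple_mem_interval_iff_general {G : Type*} [Group G] (Γ : GarsideStructure G)
    (r : ℕ) (p q : Fin r → ℤ) (v : Fin r → G)
    (w z : Fin r → G)
    (hw : ∀ i, w i ∈ Γ.pos ∧ v i = Γ.Δ ^ (p i) * w i)
    (hz : ∀ i, z i ∈ Γ.pos ∧ v i = z i * Γ.Δ ^ (p i))
    (s : G) :
    Γ.InInterval p q (fun i => s * v i * s⁻¹) ↔
      ∀ i, Γ.RightDvd (s * z i) (Γ.tau (-(p i)) s) ∧
        Γ.RightDvd (s * ((w i)⁻¹ * Γ.Δ ^ (q i - p i))) (Γ.tau (q i) s) :=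
  forall_congr' fun i => and_congr
    (by dsimp only; rw [(hz i).2]; exact Γ.zpow_leftDvd_conj_iff s (z i) (p i))
    (by dsimp only; rw [(hw i).2]; exact Γ.conj_leftDvd_zpow_iff s (w i) (p i) (q i))

/-- Characterization of when `v^{s⁻¹} ∈ [p,q]` for a simple element `s`:
writing `vᵢ = Δ^{pᵢ} wᵢ = zᵢ Δ^{pᵢ}` with `wᵢ, zᵢ ∈ G⁺`, `wᵢ⁻¹ Δ^{qᵢ−pᵢ} ∈ G⁺` and
`Δ^{qᵢ−pᵢ} zᵢ⁻¹ ∈ G⁺`, we have `v^{s⁻¹} ∈ [p,q]` iff for all `i`: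
`s zᵢ ≽ τ^{−pᵢ}(s)` and `s (wᵢ⁻¹ Δ^{qᵢ−pᵢ}) ≽ τ^{qᵢ}(s)`. -/
theorem conj_inv_simple_mem_interval_iff {G : Type*} [Group G] (Γ : GarsideStructure G)
    (r : ℕ) (p q : Fin r → ℤ) (v : Fin r → G) (hv : Γ.InInterval p q v)
    (w z : Fin r → G)
    (hw : ∀ i, w i ∈ Γ.pos ∧ v i = Γ.Δ ^ (p i) * w i)
    (hz : ∀ i, z i ∈ Γ.pos ∧ v i = z i * Γ.Δ ^ (p i))
    (hw' : ∀ i, (w i)⁻¹ * Γ.Δ ^ (q i - p i) ∈ Γ.pos)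
    (hz' : ∀ i, Γ.Δ ^ (q i - p i) * (z i)⁻¹ ∈ Γ.pos)
    (s : G) (hs : Γ.Simple s) :
    Γ.InInterval p q (fun i => s * v i * s⁻¹) ↔
      ∀ i, Γ.RightDvd (s * z i) (Γ.tau (-(p i)) s) ∧
        Γ.RightDvd (s * ((w i)⁻¹ * Γ.Δ ^ (q i - p i))) (Γ.tau (q i) s) :=
  conj_inv_simple_mem_interval_iff_general Γ r p q v w z hw hz s
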